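/- Let G be a vertex-weighted graph with positive weights, let v be a vertex with w(v) ≤ w(u) for all u ∈ N[v], and let G' be obtained from G by the modified weighted struction at v. If I' is an independent set of G' that contains no new vertex and no vertex of N(v), then I' ∪ {v} is an independent set of G and its weight in G equals the weight of I' in G' plus w(v). -/
import Mathlib


/-!
Modified weighted struction: applied at a vertex `v` whose weight is minimum
in its closed neighborhood.  It removes `v`, lowers the weight of every
neighbor of `v` by `w v`, adds a new vertex `v_{x,y}` of weight `w y` for
every pair of non-adjacent neighbors `x < y` of `v`, connects every neighbor
`k` of `v` to every new vertex `v_{x,y}` with `x ≠ k`, and turns `N(v)` into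
a clique.
-/

open scoped Classical

variable {V : Type*}

/-- `I` is an independent set of `G`. -/
def IsIndep (G : SimpleGraph V) (I : Finset V) : Prop :=
  ∀ x ∈ I, ∀ y ∈ I, ¬ G.Adj x y

/-- The weighted independence number of `G` with weights `w`: the supremum
(for a finite graph, the maximum) of the weights of independent sets. -/
noncomputable def alphaW (G : SimpleGraph V) (w : V → ℝ) : ℝ :=
  sSup {r : ℝ | ∃ I : Finset V, IsIndep G I ∧ r = ∑ x ∈ I, w x}

/-- Old vertices of the struction at `v`: all vertices except `v`. -/
abbrev StrOld (v : V) : Type _ := {u : V // u ≠ v}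

/-- New vertices of the struction at `v`: pairs of non-adjacent neighbors
`x < y` of `v` (with respect to the fixed linear order on the vertices). -/
abbrev StrNew [LinearOrder V] (G : SimpleGraph V) (v : V) : Type _ :=
  {p : V × V // G.Adj v p.1 ∧ G.Adj v p.2 ∧ p.1 < p.2 ∧ ¬ G.Adj p.1 p.2}

/-- Adjacency for the modified weighted struction at `v`:
the edges of the original struction, plus an edge between each neighbor `k`
of `v` and each new vertex `v_{x,y}` with `x ≠ k`, plus all edges making
`N(v)` a clique. -/
def modRel [LinearOrder V] (G : SimpleGraph V) (v : V) :
    StrOld v ⊕ StrNew G v → StrOld v ⊕ StrNew G v → Prop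
  | Sum.inl u, Sum.inl u' => G.Adj u.val u'.val ∨ (G.Adj v u.val ∧ G.Adj v u'.val)
  | Sum.inl u, Sum.inr p =>
      G.Adj u.val p.val.1 ∨ G.Adj u.val p.val.2 ∨ (G.Adj v u.val ∧ u.val ≠ p.val.1)
  | Sum.inr p, Sum.inl u =>
      G.Adj u.val p.val.1 ∨ G.Adj u.val p.val.2 ∨ (G.Adj v u.val ∧ u.val ≠ p.val.1)
  | Sum.inr p, Sum.inr q => p.val.1 ≠ q.val.1 ∨ G.Adj p.val.2 q.val.2

/-- The graph obtained from `G` by the modified weighted struction at `v`. -/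
def modStruction [LinearOrder V] (G : SimpleGraph V) (v : V) :
    SimpleGraph (StrOld v ⊕ StrNew G v) :=
  SimpleGraph.fromRel (modRel G v)

/-- Weights after the modified struction: neighbors of `v` have their weight
lowered by `w v`, other old vertices keep their weight, and each new vertex
`v_{x,y}` has weight `w y`. -/
noncomputable def modWeight [LinearOrder V] (G : SimpleGraph V) (w : V → ℝ) (v : V) :
    StrOld v ⊕ StrNew G v → ℝ
  | Sum.inl u => if G.Adj v u.val then w u.val - w v else w u.val
  | Sum.inr p => w p.val.2

/-- The old vertices of `I'` seen back in `V`. -/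
noncomputable def oldBack [Fintype V] [LinearOrder V] (G : SimpleGraph V) (v : V)
    (I' : Finset (StrOld v ⊕ StrNew G v)) : Finset V :=
  Finset.univ.filter fun y => ∃ h : y ≠ v, Sum.inl (⟨y, h⟩ : StrOld v) ∈ I'

/-- if `I'` is an independent set of the modified struction
graph `G'` containing no new vertex and no vertex of `N(v)`, then
`I' ∪ {v}` is an independent set of `G` whose weight in `G` equals the
weight of `I'` in `G'` plus `w v`. -/
theorem modified_struction_add_center [Fintype V] [LinearOrder V]
    (G : SimpleGraph V) (w : V → ℝ) (hw : ∀ u, 0 < w u) (v : V)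
    (hv : ∀ u, (u = v ∨ G.Adj v u) → w v ≤ w u)
    (I' : Finset (StrOld v ⊕ StrNew G v)) (hI' : IsIndep (modStruction G v) I')
    (hnew : ∀ p : StrNew G v, Sum.inr p ∉ I')
    (hnbr : ∀ u : StrOld v, Sum.inl u ∈ I' → ¬ G.Adj v u.val) :
    IsIndep G (insert v (oldBack G v I')) ∧
      ∑ x ∈ insert v (oldBack G v I'), w x =
        (∑ a ∈ I', modWeight G w v a) + w v := by
    classical
  have hmemOB : ∀ y, y ∈ oldBack G v I' ↔ ∃ h : y ≠ v, Sum.inl (⟨y, h⟩ : StrOld v) ∈ I' := by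
    intro y; simp [oldBack]
  have hvnot : v ∉ oldBack G v I' := by
    rw [hmemOB]; rintro ⟨h, -⟩; exact h rfl
  have hnadj : ∀ x (hx : x ≠ v) y (hy : y ≠ v),
      Sum.inl (⟨x, hx⟩ : StrOld v) ∈ I' → Sum.inl (⟨y, hy⟩ : StrOld v) ∈ I' → ¬ G.Adj x y := by
    intro x hx y hy hxm hym hadj
    have hne : x ≠ y := G.ne_of_adj hadj
    have : (modStruction G v).Adj (Sum.inl ⟨x, hx⟩) (Sum.inl ⟨y, hy⟩) := by
      refine SimpleGraph.fromRel_adj _ _ _ |>.mpr ⟨?_, Or.inl (Or.inl hadj)⟩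
      simp [hne]
    exact hI' _ hxm _ hym this
  constructor
  · intro x hx y hy hadj
    rcases Finset.mem_insert.mp hx with rfl | hx'
    · rcases Finset.mem_insert.mp hy with rfl | hy'
      · exact G.irrefl hadj
      · obtain ⟨hyv, hym⟩ := (hmemOB y).mp hy'
        exact hnbr _ hym hadj
    · obtain ⟨hxv, hxm⟩ := (hmemOB x).mp hx'
      rcases Finset.mem_insert.mp hy with rfl | hy'
      · exact hnbr _ hxm hadj.symm
      · obtain ⟨hyv, hym⟩ := (hmemOB y).mp hy'
        exact hnadj x hxv y hyv hxm hym hadj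
  · rw [Finset.sum_insert hvnot]
    have : ∑ a ∈ I', modWeight G w v a = ∑ x ∈ oldBack G v I', w x := by
      refine Finset.sum_bij (fun a _ => match a with
        | Sum.inl u => u.val
        | Sum.inr _ => v) ?_ ?_ ?_ ?_
      · rintro (u | p) ha
        · exact (hmemOB u.val).mpr ⟨u.2, ha⟩
        · exact absurd ha (hnew p)
      · rintro (u | p) ha (u' | p') ha' h
        · simpa [Subtype.ext_iff] using h
        · exact absurd ha' (hnew p')
        · exact absurd ha (hnew p)
        · exact absurd ha (hnew p)
      · intro y hy
        obtain ⟨hyv, hym⟩ := (hmemOB y).mp hy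
        exact ⟨Sum.inl ⟨y, hyv⟩, hym, rfl⟩
      · rintro (u | p) ha
        · simp [modWeight, hnbr u ha]
        · exact absurd ha (hnew p)
    rw [this]; ring
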